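/- Let {x_k}, {z_k} be sequences in ℝⁿ generated by the unconstrained accelerated mirror descent rule: z_{k+1} = z_k − ((k+1)σs/2)∇f(x_k) and ∇φ*(z_{k+1}) = (1/2)[(k+3)x_{k+1} − (k+1)x_k + (k+1)s∇f(x_k)]. Define E(k) = (k+1)(k+2)σs[f(x_k) − f(x*)] + 4 D_{φ*}(z_{k+1}, z*). If 0 < s ≤ 1/L, then for every k ≥ 0, E(k+1) − E(k) ≤ −((k+1)(k+2)σs²/2) ‖∇f(x_k)‖². -/

import Mathlib

/-
Three estimates are combined with the weights that make all inner products cancel.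
The conjugate of a `σ`-strongly convex `φ` is `1/σ`-smooth, since `∇φ*(z)` is the maximiser of
`⟪z, ·⟫ - φ` and `⟪z, ·⟫ - φ` falls off quadratically around it; this bounds the change of
`D_{φ*}(·, z*)` along the dual step `z_{k+2} - z_{k+1} = -((k+2)σs/2) ∇f(x_{k+1})`.
For `s ≤ 1/L`, convexity and `L`-smoothness give the interpolation inequality
`f a + ⟪∇f a, b - a⟫ + s/2 ‖∇f b - ∇f a‖² ≤ f b`, used at `(x_{k+1}, x*)` and `(x_{k+1}, x_k)`.
The mirror relation writes `∇φ*(z_{k+1}) - x*` through `x_{k+1} - x_k`, `x_{k+1} - x*` and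
`∇f(x_k)`; what is left is `-((k+1)(k+2)σs²/2)‖∇f(x_k)‖² - ((k+2)σs²/2)‖∇f(x_{k+1})‖²`.
-/

open Set Filter Topology
open scoped RealInnerProductSpace

/-- The Fenchel conjugate of a function on Euclidean space. -/
noncomputable def fenchelConj {n : ℕ} (φ : EuclideanSpace ℝ (Fin n) → ℝ)
    (z : EuclideanSpace ℝ (Fin n)) : ℝ :=
  ⨆ x : EuclideanSpace ℝ (Fin n), (⟪z, x⟫ - φ x)

section Gradient

variable {E : Type*} [NormedAddCommGroup E] [InnerProductSpace ℝ E] [CompleteSpace E]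
  {f : E → ℝ} {f' : E → E} {L : ℝ}

theorem HasGradientAt.hasDerivAt_add_smul {g a v : E} {t : ℝ} (h : HasGradientAt f g (a + t • v)) :
    HasDerivAt (fun τ : ℝ => f (a + τ • v)) ⟪g, v⟫ t := by
  have hline : HasDerivAt (fun τ : ℝ => a + τ • v) v t := by
    simpa using ((hasDerivAt_id t).smul_const v).const_add a
  simpa [Function.comp_def] using (hasGradientAt_iff_hasFDerivAt.mp h).comp_hasDerivAt t hline

theorem HasGradientAt.eq_of_forall_add_inner_le {g a b : E} (hf : HasGradientAt f g a)
    (h : ∀ c, f a + ⟪b, c - a⟫ ≤ f c) : g = b := by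
  have hmin : IsLocalMin (fun c => f c - ⟪b, c⟫) a :=
    Eventually.of_forall fun c => by linarith [h c, inner_sub_right (𝕜 := ℝ) b c a]
  have hzero := hmin.hasFDerivAt_eq_zero
    ((hasGradientAt_iff_hasFDerivAt.mp hf).sub (innerSL ℝ b).hasFDerivAt)
  apply (InnerProductSpace.toDual ℝ E).injective
  ext c
  simpa [sub_eq_zero] using congrArg (fun ℓ : StrongDual ℝ E => ℓ c) hzero

theorem ConvexOn.add_inner_le_of_hasGradientAt {g a : E} (hf : ConvexOn ℝ univ f)
    (hg : HasGradientAt f g a) (b : E) : f a + ⟪g, b - a⟫ ≤ f b := by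
  have hline : ConvexOn ℝ univ fun τ : ℝ => f (a + τ • (b - a)) := by
    have := hf.comp_affineMap (AffineMap.lineMap a b)
    simpa [Function.comp_def, AffineMap.lineMap_apply, add_comm] using this
  have hslope := hline.le_slope_of_hasDerivAt (mem_univ 0) (mem_univ 1) one_pos
    (HasGradientAt.hasDerivAt_add_smul (by simpa using hg))
  simp only [slope_def_field, one_smul, add_sub_cancel, zero_smul, add_zero, sub_zero, div_one]
    at hslope
  linarith

theorem le_add_inner_add_sq_of_lipschitz_gradient (hf : ∀ x, HasGradientAt f (f' x) x)
    (hL : ∀ x y, ‖f' x - f' y‖ ≤ L * ‖x - y‖) (a b : E) :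
    f b ≤ f a + ⟪f' a, b - a⟫ + L / 2 * ‖b - a‖ ^ 2 := by
  set v := b - a
  set χ : ℝ → ℝ := fun τ => f (a + τ • v) - τ * ⟪f' a, v⟫ - L / 2 * τ ^ 2 * ‖v‖ ^ 2
  have hχ : ∀ τ, HasDerivAt χ (⟪f' (a + τ • v) - f' a, v⟫ - L * τ * ‖v‖ ^ 2) τ := by
    intro τ
    have hline : HasDerivAt (fun τ : ℝ => f (a + τ • v)) ⟪f' (a + τ • v), v⟫ τ :=
      (hf _).hasDerivAt_add_smul
    have hlin := (hasDerivAt_id τ).mul_const ⟪f' a, v⟫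
    have hquad := ((hasDerivAt_pow 2 τ).const_mul (L / 2)).mul_const (‖v‖ ^ 2)
    refine ((hline.sub hlin).sub hquad).congr_deriv ?_
    rw [inner_sub_left]
    push_cast
    ring
  -- Cauchy–Schwarz and the Lipschitz bound make `χ` nonincreasing on `[0, 1]`.
  have hanti : AntitoneOn χ (Icc 0 1) := by
    refine antitoneOn_of_hasDerivWithinAt_nonpos (convex_Icc 0 1)
      (fun τ _ => (hχ τ).continuousAt.continuousWithinAt)
      (fun τ _ => (hχ τ).hasDerivWithinAt) fun τ hτ => ?_
    rw [interior_Icc] at hτ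
    have hlip : ‖f' (a + τ • v) - f' a‖ ≤ L * (τ * ‖v‖) := by
      simpa [norm_smul, abs_of_pos hτ.1] using hL (a + τ • v) a
    nlinarith [real_inner_le_norm (f' (a + τ • v) - f' a) v, norm_nonneg v]
  have hends := hanti (left_mem_Icc.mpr zero_le_one) (right_mem_Icc.mpr zero_le_one) zero_le_one
  simp only [χ, v, zero_smul, one_smul, add_zero, add_sub_cancel, zero_mul, one_mul, mul_zero,
    one_pow, mul_one, sub_zero, ne_eq, OfNat.ofNat_ne_zero, not_false_eq_true, zero_pow] at hends
  linarith

theorem ConvexOn.add_inner_add_sq_norm_sub_le (hconv : ConvexOn ℝ univ f)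
    (hf : ∀ x, HasGradientAt f (f' x) x) (hL : ∀ x y, ‖f' x - f' y‖ ≤ L * ‖x - y‖)
    {s : ℝ} (hs : 0 ≤ s) (hLs : L * s ≤ 1) (a b : E) :
    f a + ⟪f' a, b - a⟫ + s / 2 * ‖f' b - f' a‖ ^ 2 ≤ f b := by
  set d := f' b - f' a
  -- Evaluate the smoothness bound at `b` and the convexity bound at `a` in the point `b - s • d`.
  have hupper := le_add_inner_add_sq_of_lipschitz_gradient hf hL b (b - s • d)
  have hlower := hconv.add_inner_le_of_hasGradientAt (hf a) (b - s • d)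
  have hba : b - s • d - a = (b - a) - s • d := by abel
  simp only [sub_sub_cancel_left, inner_neg_right, norm_neg, inner_smul_right, norm_smul,
    Real.norm_eq_abs, abs_of_nonneg hs] at hupper
  rw [hba, inner_sub_right, inner_smul_right] at hlower
  have hd : ⟪f' b, d⟫ - ⟪f' a, d⟫ = ‖d‖ ^ 2 := by
    rw [← inner_sub_left, real_inner_self_eq_norm_sq]
  nlinarith [mul_nonneg (mul_nonneg hs (sq_nonneg ‖d‖)) (sub_nonneg.mpr hLs)]

end Gradient

section StrongConcavity

variable {E : Type*} [NormedAddCommGroup E] [InnerProductSpace ℝ E] {σ : ℝ} {ψ : E → ℝ}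

theorem StrongConvexOn.strongConcaveOn_inner_sub {φ : E → ℝ} (hφ : StrongConvexOn univ σ φ)
    (a : E) : StrongConcaveOn univ σ fun x => ⟪a, x⟫ - φ x := by
  have hlin : UniformConcaveOn univ 0 fun x => ⟪a, x⟫ :=
    uniformConcaveOn_zero.mpr ((innerₛₗ ℝ a).concaveOn convex_univ)
  simpa [StrongConcaveOn, Pi.sub_def] using hlin.sub hφ

theorem StrongConcaveOn.add_sq_le_of_forall_le (hψ : StrongConcaveOn univ σ ψ) {xb : E}
    (hmax : ∀ y, ψ y ≤ ψ xb) (y : E) : ψ y + σ / 2 * ‖y - xb‖ ^ 2 ≤ ψ xb := by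
  -- Along the segment from `xb` to `y`, the strong concavity inequality at parameter `t`, divided
  -- by `t`, reads `ψ y + σ / 2 * (1 - t) * ‖y - xb‖ ^ 2 ≤ ψ xb`; let `t → 0⁺`.
  have hseg : ∀ t ∈ Ioo (0 : ℝ) 1, ψ y + σ / 2 * (1 - t) * ‖y - xb‖ ^ 2 ≤ ψ xb := by
    intro t ⟨ht0, ht1⟩
    have h := hψ.2 (mem_univ y) (mem_univ xb) ht0.le (sub_nonneg.mpr ht1.le) (add_sub_cancel t 1)
    have hmid := h.trans (hmax _)
    simp only [smul_eq_mul] at hmid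
    nlinarith
  have hlim : Tendsto (fun t : ℝ => ψ y + σ / 2 * (1 - t) * ‖y - xb‖ ^ 2) (𝓝[>] 0)
      (𝓝 (ψ y + σ / 2 * (1 - 0) * ‖y - xb‖ ^ 2)) :=
    ((continuous_const.add ((continuous_const.mul (continuous_const.sub continuous_id)).mul
      continuous_const)).tendsto 0).mono_left nhdsWithin_le_nhds
  simpa using le_of_tendsto hlim (mem_of_superset (Ioo_mem_nhdsGT one_pos) hseg)

theorem StrongConcaveOn.exists_forall_le [FiniteDimensional ℝ E] (hψ : StrongConcaveOn univ σ ψ)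
    (hσ : 0 < σ) : ∃ xb, ∀ y, ψ y ≤ ψ xb := by
  have hconc : ConcaveOn ℝ univ ψ :=
    UniformConcaveOn.concaveOn hψ fun r => mul_nonneg (by linarith) (sq_nonneg r)
  have hcont : Continuous ψ := hconc.locallyLipschitz.continuous
  obtain ⟨B, hB⟩ := (isCompact_closedBall (0 : E) 1).bddAbove_image hcont.continuousOn
  have hB0 : ψ 0 ≤ B := hB ⟨0, by simp, rfl⟩
  -- Strong concavity on the segment from `0` to `x` bounds the superlevel set of `ψ 0`.
  refine hcont.exists_forall_ge_of_isBounded 0 <|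
    (Metric.isBounded_closedBall (x := 0) (r := 1 + 2 * (B - ψ 0) / σ)).subset fun x hx => ?_
  rw [mem_closedBall_zero_iff]
  by_contra! hr
  set r := ‖x‖
  have hr1 : 1 < r := lt_of_le_of_lt (le_add_of_nonneg_right (by positivity)) hr
  have hr0 : 0 < r := one_pos.trans hr1
  have hunit : ψ (r⁻¹ • x) ≤ B := hB ⟨_, by simp [norm_smul, r, hr0.ne'], rfl⟩
  have h := hψ.2 (mem_univ x) (mem_univ 0) (inv_nonneg.mpr hr0.le)
    (sub_nonneg.mpr (inv_le_one_of_one_le₀ hr1.le)) (add_sub_cancel _ 1)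
  simp only [smul_eq_mul, smul_zero, add_zero, sub_zero] at h
  have hcoef : r⁻¹ * (1 - r⁻¹) * (σ / 2 * r ^ 2) = σ / 2 * (r - 1) := by
    field_simp
  have hmix : ψ 0 ≤ r⁻¹ * ψ x + (1 - r⁻¹) * ψ 0 := by
    nlinarith [mul_le_mul_of_nonneg_left (show ψ 0 ≤ ψ x from hx) (inv_nonneg.mpr hr0.le)]
  have hradius : r - 1 ≤ 2 * (B - ψ 0) / σ := by
    rw [le_div_iff₀ hσ]
    linarith
  linarith

end StrongConcavity

section FenchelConjugate

variable {n : ℕ} {φ : EuclideanSpace ℝ (Fin n) → ℝ} {σ : ℝ}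

theorem fenchelConj_eq_of_forall_le {a xb : EuclideanSpace ℝ (Fin n)}
    (hxb : ∀ x, ⟪a, x⟫ - φ x ≤ ⟪a, xb⟫ - φ xb) : fenchelConj φ a = ⟪a, xb⟫ - φ xb :=
  le_antisymm (ciSup_le hxb) (le_ciSup ⟨_, forall_mem_range.mpr hxb⟩ xb)

theorem StrongConvexOn.inner_sub_le_fenchelConj (hφ : StrongConvexOn univ σ φ) (hσ : 0 < σ)
    (a x : EuclideanSpace ℝ (Fin n)) : ⟪a, x⟫ - φ x ≤ fenchelConj φ a := by
  obtain ⟨xb, hxb⟩ := (hφ.strongConcaveOn_inner_sub a).exists_forall_le hσ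
  exact le_ciSup ⟨_, forall_mem_range.mpr hxb⟩ x

theorem StrongConvexOn.fenchelConj_le_add_inner_add_sq (hφ : StrongConvexOn univ σ φ)
    (hσ : 0 < σ) {g a : EuclideanSpace ℝ (Fin n)} (hg : HasGradientAt (fenchelConj φ) g a)
    (b : EuclideanSpace ℝ (Fin n)) :
    fenchelConj φ b ≤ fenchelConj φ a + ⟪g, b - a⟫ + ‖b - a‖ ^ 2 / (2 * σ) := by
  obtain ⟨xb, hxb⟩ := (hφ.strongConcaveOn_inner_sub a).exists_forall_le hσ
  have hval := fenchelConj_eq_of_forall_le hxb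
  obtain rfl : g = xb := hg.eq_of_forall_add_inner_le fun c => by
    have := hφ.inner_sub_le_fenchelConj hσ c xb
    rw [hval, inner_sub_right, real_inner_comm c, real_inner_comm a]
    linarith
  refine ciSup_le fun x => ?_
  have hgrowth := (hφ.strongConcaveOn_inner_sub a).add_sq_le_of_forall_le hxb x
  have hyoung : ⟪b - a, x - g⟫ ≤ ‖b - a‖ ^ 2 / (2 * σ) + σ / 2 * ‖x - g‖ ^ 2 := by
    have hcs := real_inner_le_norm (b - a) (x - g)
    have : ‖b - a‖ * ‖x - g‖ - σ / 2 * ‖x - g‖ ^ 2 ≤ ‖b - a‖ ^ 2 / (2 * σ) := by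
      rw [le_div_iff₀ (by positivity)]
      nlinarith [sq_nonneg (‖b - a‖ - σ * ‖x - g‖)]
    linarith
  have hsplit : ⟪b, x⟫ = ⟪a, x⟫ + ⟪g, b - a⟫ + ⟪b - a, x - g⟫ := by
    simp only [inner_sub_left, inner_sub_right, real_inner_comm g]
    ring
  rw [hval]
  linarith

theorem StrongConvexOn.fenchelConj_bregman_sub_le (hφ : StrongConvexOn univ σ φ) (hσ : 0 < σ)
    {g z : EuclideanSpace ℝ (Fin n)} (hg : HasGradientAt (fenchelConj φ) g z)
    (p w v : EuclideanSpace ℝ (Fin n)) (t : ℝ) :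
    (fenchelConj φ (z - (σ * t) • v) - fenchelConj φ w - ⟪p, z - (σ * t) • v - w⟫) -
        (fenchelConj φ z - fenchelConj φ w - ⟪p, z - w⟫)
      ≤ -(σ * t * ⟪g - p, v⟫) + σ * t ^ 2 / 2 * ‖v‖ ^ 2 := by
  have hsmooth := hφ.fenchelConj_le_add_inner_add_sq hσ hg (z - (σ * t) • v)
  have hquad : ‖(σ * t) • v‖ ^ 2 / (2 * σ) = σ * t ^ 2 / 2 * ‖v‖ ^ 2 := by
    rw [norm_smul, mul_pow, Real.norm_eq_abs, sq_abs]
    field_simp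
  simp only [sub_sub_cancel_left, inner_neg_right, norm_neg, inner_sub_left, inner_sub_right,
    real_inner_smul_right, hquad] at hsmooth ⊢
  linarith

end FenchelConjugate

/-- For unconstrained accelerated mirror descent with `0 < s ≤ 1/L`, the Lyapunov function
`E(k) = (k+1)(k+2)σs[f(x_k) − f(x*)] + 4D_{φ*}(z_{k+1}, z*)` satisfies
`E(k+1) − E(k) ≤ −((k+1)(k+2)σs²/2)‖∇f(x_k)‖²`. -/
theorem accelerated_mirror_descent_lyapunov_difference
{n : ℕ} (f φ : EuclideanSpace ℝ (Fin n) → ℝ)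
    (f' gφs : EuclideanSpace ℝ (Fin n) → EuclideanSpace ℝ (Fin n))
    (σ L s : ℝ) (hσ : 0 < σ)
    -- f is convex and differentiable with L-Lipschitz gradient
    (hfconv : ConvexOn ℝ Set.univ f)
    (hfd : ∀ x, HasGradientAt f (f' x) x)
    (hfL : ∀ x y, ‖f' x - f' y‖ ≤ L * ‖x - y‖)
    -- φ is σ-strongly convex
    (hφsc : StrongConvexOn Set.univ σ φ)
    -- φ* is differentiable with gradient gφs
    (hgφs : ∀ z, HasGradientAt (fenchelConj φ) (gφs z) z)
    -- the unconstrained accelerated mirror descent iteration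
    (x z : ℕ → EuclideanSpace ℝ (Fin n))
    (hz : ∀ k : ℕ, z (k + 1) = z k - ((((k : ℝ) + 1) * σ * s) / 2) • f' (x k))
    (hxz : ∀ k : ℕ, gφs (z (k + 1)) =
      (1 / 2 : ℝ) • ((((k : ℝ) + 3)) • x (k + 1) - (((k : ℝ) + 1)) • x k +
        ((((k : ℝ) + 1)) * s) • f' (x k)))
    -- x* is a global minimizer of f and ∇φ*(z*) = x*
    (xs zs : EuclideanSpace ℝ (Fin n))
    (hxs : ∀ w, f xs ≤ f w) (hzs : gφs zs = xs)
    (hs : 0 < s) (hsL : s ≤ 1 / L) :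
    ∀ k : ℕ,
      ((((k : ℝ) + 2) * ((k : ℝ) + 3)) * σ * s * (f (x (k + 1)) - f xs) +
          4 * (fenchelConj φ (z (k + 2)) - fenchelConj φ zs - ⟪gφs zs, z (k + 2) - zs⟫)) -
        ((((k : ℝ) + 1) * ((k : ℝ) + 2)) * σ * s * (f (x k) - f xs) +
          4 * (fenchelConj φ (z (k + 1)) - fenchelConj φ zs - ⟪gφs zs, z (k + 1) - zs⟫))
        ≤ -((((k : ℝ) + 1) * ((k : ℝ) + 2) * σ * s ^ 2) / 2) * ‖f' (x k)‖ ^ 2 := by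
  intro k
  have hLs : L * s ≤ 1 := by
    have hL : 0 < L := one_div_pos.mp (hs.trans_le hsL)
    rwa [le_div_iff₀ hL, mul_comm] at hsL
  have hcrit : f' xs = 0 := (hfd xs).eq_of_forall_add_inner_le fun c => by simpa using hxs c
  have hopt := hfconv.add_inner_add_sq_norm_sub_le hfd hfL hs.le hLs (x (k + 1)) xs
  have hdesc := hfconv.add_inner_add_sq_norm_sub_le hfd hfL hs.le hLs (x (k + 1)) (x k)
  rw [hcrit, zero_sub, norm_neg, real_inner_comm] at hopt
  rw [norm_sub_sq_real, real_inner_comm (x k - x (k + 1))] at hdesc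
  have hstep : z (k + 2) = z (k + 1) - (σ * (((k : ℝ) + 2) * s / 2)) • f' (x (k + 1)) := by
    rw [hz (k + 1)]
    congr 2
    push_cast
    ring
  have hdual := hφsc.fenchelConj_bregman_sub_le hσ (hgφs (z (k + 1))) (gφs zs) zs
    (f' (x (k + 1))) (((k : ℝ) + 2) * s / 2)
  rw [← hstep] at hdual
  have hmirror : 2 * ⟪gφs (z (k + 1)) - xs, f' (x (k + 1))⟫ =
      -(((k : ℝ) + 1) * ⟪x k - x (k + 1), f' (x (k + 1))⟫) - 2 * ⟪xs - x (k + 1), f' (x (k + 1))⟫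
        + ((k : ℝ) + 1) * s * ⟪f' (x k), f' (x (k + 1))⟫ := by
    simp only [hxz k, inner_sub_left, inner_add_left, real_inner_smul_left]
    ring
  rw [hzs] at hdual ⊢
  linear_combination 4 * hdual + ((k : ℝ) + 1) * ((k : ℝ) + 2) * σ * s * hdesc
    + 2 * ((k : ℝ) + 2) * σ * s * hopt - ((k : ℝ) + 2) * σ * s * hmirror
    + ((k : ℝ) + 2) * σ * s ^ 2 / 2 * sq_nonneg ‖f' (x (k + 1))‖
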